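/- If a single-factor model holds, i.e., each observed variable satisfies Xᵢ = λᵢF + εᵢ with F and all εᵢ uncorrelated and unit-variance F, then Corr(Xᵢ, Xⱼ) · Corr(Xₖ, Xₗ) = Corr(Xᵢ, Xₗ) · Corr(Xₖ, Xⱼ) for all distinct indices i, j, k, l (the tetrad condition). -/

import Mathlib

open RealInnerProductSpace

/-! Under a one-factor model the covariance of two observed variables is the product of
their loadings, so the off-diagonal correlations factor as `ρᵢⱼ = (λᵢ/‖Xᵢ‖)(λⱼ/‖Xⱼ‖)` and both
sides of the tetrad identity equal the same product of four such factors. -/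

section

variable {E : Type*} [NormedAddCommGroup E] [InnerProductSpace ℝ E]

theorem inner_smul_add_smul_add_of_orthogonal {F e e' : E} (a b : ℝ)
    (he : ⟪F, e⟫ = 0) (he' : ⟪F, e'⟫ = 0) (hee' : ⟪e, e'⟫ = 0) :
    ⟪a • F + e, b • F + e'⟫ = a * b * ‖F‖ ^ 2 := by
  have he_left : ⟪e, F⟫ = 0 := by rw [real_inner_comm]; exact he
  simp only [inner_add_left, inner_add_right, real_inner_smul_left, real_inner_smul_right,
    real_inner_self_eq_norm_sq, he', he_left, hee']
  ring

theorem tetrad_of_inner_eq_mul {ι : Type*} {X : ι → E} {lam : ι → ℝ}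
    {i j k l : ι} (hij : i ≠ j) (hil : i ≠ l) (hkj : k ≠ j) (hkl : k ≠ l)
    (hcov : ∀ i j, i ≠ j → ⟪X i, X j⟫ = lam i * lam j) :
    (⟪X i, X j⟫ / (‖X i‖ * ‖X j‖)) * (⟪X k, X l⟫ / (‖X k‖ * ‖X l‖)) =
      (⟪X i, X l⟫ / (‖X i‖ * ‖X l‖)) * (⟪X k, X j⟫ / (‖X k‖ * ‖X j‖)) := by
  rw [hcov i j hij, hcov k l hkl, hcov i l hil, hcov k j hkj]
  ring

end

theorem tetrad_condition_general
    {E : Type*} [NormedAddCommGroup E] [InnerProductSpace ℝ E]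
    {n : ℕ}
    (X : Fin n → E) (lam : Fin n → ℝ) (F : E) (ε : Fin n → E)
    (hF : ‖F‖ = 1)
    (hmodel : ∀ i, X i = lam i • F + ε i)
    (herr : ∀ i j, i ≠ j → ⟪ε i, ε j⟫ = 0)
    (herrF : ∀ i, ⟪F, ε i⟫ = 0) :
    ∀ i j k l : Fin n, i ≠ j → i ≠ k → i ≠ l → j ≠ k → j ≠ l → k ≠ l →
      (⟪X i, X j⟫ / (‖X i‖ * ‖X j‖)) * (⟪X k, X l⟫ / (‖X k‖ * ‖X l‖)) =
      (⟪X i, X l⟫ / (‖X i‖ * ‖X l‖)) * (⟪X k, X j⟫ / (‖X k‖ * ‖X j‖)) := by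
  intro i j k l hij _ hil hjk _ hkl
  have hcov : ∀ i j, i ≠ j → ⟪X i, X j⟫ = lam i * lam j := fun i j hij => by
    rw [hmodel i, hmodel j,
      inner_smul_add_smul_add_of_orthogonal _ _ (herrF i) (herrF j) (herr i j hij), hF]
    ring
  exact tetrad_of_inner_eq_mul hij hil hjk.symm hkl hcov

/-- Tetrad condition: if each observed variable satisfies `Xᵢ = λᵢ F + εᵢ` with
`F` unit-variance, errors mutually uncorrelated and uncorrelated with `F`, and
each `Xᵢ` has positive variance, then
`Corr(Xᵢ,Xⱼ)·Corr(Xₖ,Xₗ) = Corr(Xᵢ,Xₗ)·Corr(Xₖ,Xⱼ)` for distinct `i,j,k,l`. -/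
theorem tetrad_condition
    {E : Type*} [NormedAddCommGroup E] [InnerProductSpace ℝ E]
    {n : ℕ} (hn : 4 ≤ n)
    (X : Fin n → E) (lam : Fin n → ℝ) (F : E) (ε : Fin n → E)
    (hF : ‖F‖ = 1)
    (hmodel : ∀ i, X i = lam i • F + ε i)
    (herr : ∀ i j, i ≠ j → ⟪ε i, ε j⟫ = 0)
    (herrF : ∀ i, ⟪F, ε i⟫ = 0)
    (hvar : ∀ i, 0 < ‖X i‖) :
    ∀ i j k l : Fin n, i ≠ j → i ≠ k → i ≠ l → j ≠ k → j ≠ l → k ≠ l →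
      (⟪X i, X j⟫ / (‖X i‖ * ‖X j‖)) * (⟪X k, X l⟫ / (‖X k‖ * ‖X l‖)) =
      (⟪X i, X l⟫ / (‖X i‖ * ‖X l‖)) * (⟪X k, X j⟫ / (‖X k‖ * ‖X j‖)) :=
  tetrad_condition_general X lam F ε hF hmodel herr herrF
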